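/- arXiv:0802.2866 — 4 statements merged into one kernel-verified Lean document; each statement's English description precedes it below -/
import Mathlib

section
/- Let S be a finite nonempty semigroup and let c be a map assigning to each pair (m,n) of natural numbers with m < n an element c(m,n) ∈ S, such that c is additive: c(m,p) = c(m,n)·c(n,p) whenever m < n < p. Then there exist an infinite set H ⊆ ℕ and an idempotent e ∈ S (e·e = e) such that c(m,n) = e for all m < n with m, n ∈ H. -/
/-!
Fix a nonprincipal ultrafilter `U` on `ℕ`. Since `S` is finite, for each `m` the colour `c m n`
is `U`-almost surely some constant `f m`, and `f` is itself `U`-almost surely some constant `e`.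
So for `U`-almost all `m`, `c m n = e` for `U`-almost all `n`, and a greedy choice yields an
increasing sequence on which all pairs have colour `e`. Additivity on three of its points
gives `e = e * e`.
-/

open Filter

theorem Ultrafilter.exists_eventually_eq {α β : Type*} [Finite β] (f : Ultrafilter α)
    (g : α → β) : ∃ b, ∀ᶠ a in f, g a = b :=
  Ultrafilter.eventually_exists_iff.1 (Eventually.of_forall fun a => ⟨g a, rfl⟩)

theorem Filter.exists_strictMono_forall_lt_of_eventually_eventually {α : Type*} [Preorder α]
    [NoMaxOrder α] {l : Filter α} [l.NeBot] (hl : l ≤ atTop) {R : α → α → Prop}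
    (h : ∀ᶠ x in l, ∀ᶠ y in l, R x y) :
    ∃ φ : ℕ → α, StrictMono φ ∧ ∀ i j, i < j → R (φ i) (φ j) := by
  obtain ⟨φ, -, hφ⟩ := exists_seq_of_forall_finset_exists (fun x => ∀ᶠ y in l, R x y)
    (fun x y => x < y ∧ R x y) fun s hs => by
      have hlarge : ∀ᶠ y in l, ∀ x ∈ s, x < y ∧ R x y :=
        s.eventually_all.2 fun x hx => ((eventually_gt_atTop x).filter_mono hl).and (hs x hx)
      exact (h.and hlarge).exists
  exact ⟨φ, fun i j hij => (hφ i j hij).1, fun i j hij => (hφ i j hij).2⟩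

theorem stmt4_general {S : Type*} [Semigroup S] [Finite S]
    (c : ℕ → ℕ → S) (hadd : ∀ m n p : ℕ, m < n → n < p → c m p = c m n * c n p) :
    ∃ H : Set ℕ, H.Infinite ∧ ∃ e : S, e * e = e ∧
      ∀ m ∈ H, ∀ n ∈ H, m < n → c m n = e := by
  let U := hyperfilter ℕ
  choose f hf using fun m => U.exists_eventually_eq (c m)
  obtain ⟨e, he⟩ := U.exists_eventually_eq f
  obtain ⟨φ, hφ, hφe⟩ := exists_strictMono_forall_lt_of_eventually_eventually
    Nat.hyperfilter_le_atTop (he.mono fun m hm => hm ▸ hf m)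
  refine ⟨Set.range φ, Set.infinite_range_of_injective hφ.injective, e, ?_, ?_⟩
  · have h012 := hadd (φ 0) (φ 1) (φ 2) (hφ zero_lt_one) (hφ one_lt_two)
    rwa [hφe 0 1 zero_lt_one, hφe 1 2 one_lt_two, hφe 0 2 zero_lt_two, eq_comm] at h012
  · rintro _ ⟨i, rfl⟩ _ ⟨j, rfl⟩ hij
    exact hφe i j (hφ.lt_iff_lt.1 hij)

/-- additive Ramsey for finite semigroups: if `c` assigns to each pair
`m < n` an element of a finite nonempty semigroup `S` additively, i.e.
`c m p = c m n * c n p` for `m < n < p`, then there is an infinite set `H ⊆ ℕ` and an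
idempotent `e ∈ S` with `c m n = e` for all `m, n ∈ H` with `m < n`. -/
theorem stmt4 {S : Type*} [Semigroup S] [Finite S] [Nonempty S]
    (c : ℕ → ℕ → S) (hadd : ∀ m n p : ℕ, m < n → n < p → c m p = c m n * c n p) :
    ∃ H : Set ℕ, H.Infinite ∧ ∃ e : S, e * e = e ∧
      ∀ m ∈ H, ∀ n ∈ H, m < n → c m n = e :=
  stmt4_general c hadd
end

section
/- Let I be a finite index set and, for each i ∈ I, let Σ_i be an alphabet, α_i : ℕ → Σ_i an ω-word, M_i a finite monoid, and h_i : Σ_i → M_i a map. Then there exist a single strictly increasing sequence a : ℕ → ℕ and idempotent elements e_i ∈ M_i (e_i·e_i = e_i) such that for every i ∈ I, the sequence a is an (h_i, e_i)-homogeneous factorisation of α_i. -/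
/-!
Colour each pair `m < n` by the tuple `(h_i(α_i[m,n)))_i` in the finite monoid `∏ i, M i`.
By the infinite Ramsey theorem some strictly increasing `a` has all pairs `a m < a n` of a
single colour `e`; then `e` is idempotent because `[a 0, a 1) ++ [a 1, a 2) = [a 0, a 2)`.
-/

/-- The product `h(α[m,n)) = h (α m) * h (α (m+1)) * ⋯ * h (α (n-1))` in a monoid. -/
def blockProd {A M : Type*} [Monoid M] (h : A → M) (α : ℕ → A) (m n : ℕ) : M :=
  ((List.range' m (n - m)).map fun i => h (α i)).prod

/-- A strictly increasing sequence `a` is an `(h,e)`-homogeneous factorisation of `α`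
if `h(α[a n, a (n+1))) = e` for all `n`. -/
def Homog {A M : Type*} [Monoid M] (h : A → M) (e : M) (a : ℕ → ℕ) (α : ℕ → A) : Prop :=
  ∀ n : ℕ, blockProd h α (a n) (a (n + 1)) = e

lemma blockProd_mul_blockProd {A M : Type*} [Monoid M] (h : A → M) (α : ℕ → A) {m n k : ℕ}
    (hmn : m ≤ n) (hnk : n ≤ k) :
    blockProd h α m n * blockProd h α n k = blockProd h α m k := by
  have hsplit : List.range' m (n - m) ++ List.range' n (k - n) = List.range' m (k - m) := by
    have := List.range'_append (s := m) (m := n - m) (n := k - n) (step := 1)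
    rwa [one_mul, Nat.add_sub_cancel' hmn, add_comm, Nat.sub_add_sub_cancel hnk hmn] at this
  simp only [blockProd, ← List.prod_append, ← List.map_append, hsplit]

section Ramsey

variable {C : Type*} [Finite C] (c : ℕ → ℕ → C)

lemma Set.Infinite.exists_infinite_monochromatic_above {S : Set ℕ} (hS : S.Infinite) :
    ∃ x ∈ S, ∃ e, {n ∈ S | x < n ∧ c x n = e}.Infinite := by
  obtain ⟨x, hx⟩ := hS.nonempty
  refine ⟨x, hx, ?_⟩
  by_contra! hfin
  refine (hS.sdiff (Set.finite_Iic x)).mono ?_ (Set.finite_iUnion hfin)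
  rintro n ⟨hnS, hnx⟩
  exact Set.mem_iUnion.2 ⟨c x n, hnS, not_le.1 hnx, rfl⟩

theorem exists_strictMono_monochromatic_pairs :
    ∃ a : ℕ → ℕ, StrictMono a ∧ ∃ e, ∀ m n, m < n → c (a m) (a n) = e := by
  have : Nonempty C := ⟨c 0 0⟩
  choose! x hxS e he using fun (S : Set ℕ) (hS : S.Infinite) =>
    hS.exists_infinite_monochromatic_above c
  set next : Set ℕ → Set ℕ := fun S => {n ∈ S | x S < n ∧ c (x S) n = e S}
  set chain : ℕ → Set ℕ := fun k => next^[k] Set.univ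
  have chain_succ (k : ℕ) : chain (k + 1) = next (chain k) :=
    Function.iterate_succ_apply' next k Set.univ
  have chain_infinite (k : ℕ) : (chain k).Infinite := by
    induction k with
    | zero => exact Set.infinite_univ
    | succ k ih => rw [chain_succ]; exact he _ ih
  have chain_anti : Antitone chain :=
    antitone_nat_of_succ_le fun k => by rw [chain_succ]; exact Set.sep_subset _ _
  have joined {m n : ℕ} (hmn : m < n) :
      x (chain m) < x (chain n) ∧ c (x (chain m)) (x (chain n)) = e (chain m) := by
    have hmem : x (chain n) ∈ chain (m + 1) := chain_anti hmn (hxS _ (chain_infinite n))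
    rw [chain_succ] at hmem
    exact hmem.2
  obtain ⟨e₀, he₀⟩ := Finite.exists_infinite_fiber fun k => e (chain k)
  obtain ⟨φ, hφ, hφe₀⟩ := Filter.extraction_of_frequently_atTop
    (Nat.frequently_atTop_iff_infinite.2 (Set.infinite_coe_iff.1 he₀))
  refine ⟨fun k => x (chain (φ k)), fun m n hmn => (joined (hφ hmn)).1, e₀, fun m n hmn => ?_⟩
  rw [(joined (hφ hmn)).2]
  exact hφe₀ m

end Ramsey

/-- for a finite family of ω-words `α i` and maps `h i` into finite
monoids `M i`, there is a single strictly increasing sequence `a` and idempotents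
`e i` such that `a` is an `(h i, e i)`-homogeneous factorisation of `α i` for each `i`. -/
theorem stmt5 {I : Type*} [Finite I] (A : I → Type*) (M : I → Type*)
    [∀ i, Monoid (M i)] [∀ i, Finite (M i)]
    (α : ∀ i, ℕ → A i) (h : ∀ i, A i → M i) :
    ∃ a : ℕ → ℕ, StrictMono a ∧ ∃ e : ∀ i, M i,
      ∀ i, (e i * e i = e i) ∧ Homog (h i) (e i) a (α i) := by
  obtain ⟨a, ha, e, he⟩ :=
    exists_strictMono_monochromatic_pairs fun m n i => blockProd (h i) (α i) m n
  refine ⟨a, ha, e, fun i => ⟨?_, fun n => congrFun (he n (n + 1) n.lt_succ_self) i⟩⟩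
  have hblock {m n : ℕ} (hmn : m < n) : blockProd (h i) (α i) (a m) (a n) = e i :=
    congrFun (he m n hmn) i
  calc e i * e i
      = blockProd (h i) (α i) (a 0) (a 1) * blockProd (h i) (α i) (a 1) (a 2) := by
        rw [hblock one_pos, hblock one_lt_two]
    _ = blockProd (h i) (α i) (a 0) (a 2) :=
        blockProd_mul_blockProd _ _ (ha.monotone zero_le_one) (ha.monotone one_le_two)
    _ = e i := hblock two_pos
end

section
/- (Coarsening step.) Let Σ and Δ be alphabets, z : ℕ → Δ, and x₁, x₂ : ℕ → Σ ω-words. Let M and N be finite monoids with maps f : Σ × Δ → M and when convenient g : Σ × Σ → N, both extended multiplicatively to finite words. Let h : ℕ → ℕ be strictly increasing and suppose: (a) for every n there is a position m with h(n) ≤ m < h(n+1) and x₁ m ≠ x₂ m; (b) there is an idempotent q ∈ M such that h is an (f,q)-homogeneous factorisation of both of the convolutions zip(x₁,z) and zip(x₂,z); (c) there are idempotents t₁₁, t₁₂, t₂₁, t₂₂ ∈ N with t₁₁ = t₂₂ such that for all i,j ∈ {1,2}, h is a (g, t_{ij})-homogeneous factorisation of zip(x_i, x_j). Then there exist a strictly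 increasing sequence G : ℕ → ℕ whose range is contained in the range of h, ω-words y₁, y₂ : ℕ → Σ, an idempotent s ∈ M, and idempotents t, t↑, t↓ ∈ N such that: (1) y₁ agrees with x₂ on all positions below h(2) and agrees with x₁ on all positions at or above h(2) (in particular y₁ =_e x₁), and y₂ agrees with x₂ on all positions below h(2); (2) for every n there is a position m with G(n) ≤ m < G(n+1) and y₁ m ≠ y₂ m (so y₁ ≠_e y₂); (3) G is an (f,s)-homogeneous factorisation of both zip(y₁,z) and zip(y₂,z); (4) t↑·t = t↑ and t↓·t = t↓; for j = 1,2 the element g(zip(y_j,y_j)[0, G 0)) absorbs t on the right, i.e. g(zip(y_j,y_j)[0, G 0))·t = g(zip(y_j,y_j)[0, G 0)); (5) for j = 1,2, G is a (g,t)-homogeneous factorisation of zip(y_j,y_j), G is a (g,t↑)-homogeneous factorisation of zip(y₁,y₂), and G is a (g,t↓)-homogeneous factorisation of zip(y₂,y₁). -/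
/-- The convolution of two ω-words. -/
def zipWord {A B : Type*} (x : ℕ → A) (y : ℕ → B) : ℕ → A × B := fun n => (x n, y n)

/-!
Let `y₁` follow `x₂` before `h 2` and `x₁` afterwards, and let `y₂` follow `x₂` before `h 2`,
then `x₂` on the blocks `[h j, h (j + 1))` with `j` even and `x₁` on those with `j` odd. On each
pair of blocks `2 + 2i, 3 + 2i` the pair `(y₁, y₂)` reads `(x₁, x₂)` and then `(x₁, x₁)`, so
`zip(y₁, y₂)` and `zip(y₂, y₁)` have the alternating block values `t₁₂, t₁₁` and `t₂₁, t₁₁`,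
while the other convolutions have constant idempotent block values. Merging `2k` blocks, where
`(t₁₂ t₁₁)^k` and `(t₂₁ t₁₁)^k` are idempotent (`N` is finite), gives `G`. Every merged block
ends in an `(x₁, x₁)` block, which is why `t↑` and `t↓` absorb `t = t₁₁`; the prefix before
`G 0 = h 2` ends in the block `[h 1, h 2)` of value `t₂₂ = t₁₁`.
-/

open Set

section BlockProd

variable {A M : Type*} [Monoid M] (f : A → M)

theorem blockProd_consecutive {α : ℕ → A} {m n p : ℕ} (hmn : m ≤ n) (hnp : n ≤ p) :
    blockProd f α m n * blockProd f α n p = blockProd f α m p := by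
  obtain ⟨a, rfl⟩ := Nat.exists_eq_add_of_le hmn
  obtain ⟨b, rfl⟩ := Nat.exists_eq_add_of_le hnp
  simp only [blockProd, Nat.add_sub_cancel_left, ← List.prod_append, ← List.map_append,
    List.range'_append_1, Nat.add_assoc, Nat.add_sub_add_left]

theorem blockProd_congr {α β : ℕ → A} {m n : ℕ} (hαβ : EqOn α β (Ico m n)) :
    blockProd f α m n = blockProd f β m n := by
  refine congrArg List.prod (List.map_congr_left fun i hi => ?_)
  rw [List.mem_range'_1] at hi
  exact congrArg f (hαβ ⟨hi.1, by omega⟩)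

theorem blockProd_mul_eq_self_of_eqOn_homog {a : ℕ → ℕ} (ha : Monotone a) {α β : ℕ → A} {e : M}
    {j : ℕ} (hαβ : EqOn α β (Iio (a (j + 1)))) (hβ : Homog f e a β) (he : IsIdempotentElem e) :
    blockProd f α 0 (a (j + 1)) * e = blockProd f α 0 (a (j + 1)) := by
  rw [blockProd_congr f (hαβ.mono Ico_subset_Iio_self),
    ← blockProd_consecutive f (Nat.zero_le (a j)) (ha j.le_succ), hβ j, mul_assoc, he.eq]

theorem blockProd_alternating {a : ℕ → ℕ} (ha : Monotone a) {α : ℕ → A} {c : ℕ} {u v : M}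
    (hu : ∀ i, blockProd f α (a (c + 2 * i)) (a (c + 2 * i + 1)) = u)
    (hv : ∀ i, blockProd f α (a (c + 2 * i + 1)) (a (c + 2 * i + 2)) = v) (j k : ℕ) :
    blockProd f α (a (c + 2 * j)) (a (c + 2 * (j + k))) = (u * v) ^ k := by
  induction k with
  | zero => simp [blockProd]
  | succ k ih =>
    rw [show c + 2 * (j + (k + 1)) = c + 2 * (j + k) + 2 by ring,
      ← blockProd_consecutive f (ha (by omega : c + 2 * j ≤ c + 2 * (j + k))) (ha (by omega)), ih,
      ← blockProd_consecutive f (ha (c + 2 * (j + k)).le_succ) (ha (by omega)), hu, hv,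
      pow_succ]

theorem homog_coarsen_of_eqOn {a : ℕ → ℕ} (ha : Monotone a) (c k : ℕ) {α αu αv : ℕ → A}
    {u v : M} (hαu : ∀ i, EqOn α αu (Ico (a (c + 2 * i)) (a (c + 2 * i + 1))))
    (hαv : ∀ i, EqOn α αv (Ico (a (c + 2 * i + 1)) (a (c + 2 * i + 2))))
    (hu : Homog f u a αu) (hv : Homog f v a αv) :
    Homog f ((u * v) ^ k) (fun n => a (c + 2 * (k * n))) α := fun n => by
  simpa only [mul_add_one] using blockProd_alternating f ha
    (fun i => (blockProd_congr f (hαu i)).trans (hu _))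
    (fun i => (blockProd_congr f (hαv i)).trans (hv _)) (k * n) k

theorem homog_coarsen_of_eqOn_of_isIdempotentElem {a : ℕ → ℕ} (ha : Monotone a) (c : ℕ)
    {k : ℕ} (hk : k ≠ 0) {α αu αv : ℕ → A} {e : M}
    (hαu : ∀ i, EqOn α αu (Ico (a (c + 2 * i)) (a (c + 2 * i + 1))))
    (hαv : ∀ i, EqOn α αv (Ico (a (c + 2 * i + 1)) (a (c + 2 * i + 2))))
    (he : IsIdempotentElem e) (hu : Homog f e a αu) (hv : Homog f e a αv) :
    Homog f e (fun n => a (c + 2 * (k * n))) α := by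
  simpa only [he.eq, he.pow_eq hk] using homog_coarsen_of_eqOn f ha c k hαu hαv hu hv

end BlockProd

theorem Set.EqOn.zipWord {A B : Type*} {x x' : ℕ → A} {y y' : ℕ → B} {s : Set ℕ}
    (hx : EqOn x x' s) (hy : EqOn y y' s) : EqOn (zipWord x y) (zipWord x' y') s :=
  fun _ hm => Prod.ext (hx hm) (hy hm)

section Idempotent

variable {M : Type*} [Monoid M]

theorem IsIdempotentElem.mul_pow_mul_self {a b : M} (hb : IsIdempotentElem b) {k : ℕ}
    (hk : k ≠ 0) : (a * b) ^ k * b = (a * b) ^ k := by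
  obtain ⟨k, rfl⟩ := Nat.exists_eq_succ_of_ne_zero hk
  rw [pow_succ, mul_assoc, mul_assoc, hb.eq]

theorem exists_isIdempotentElem_pow [Finite M] (a : M) : ∃ k ≠ 0, IsIdempotentElem (a ^ k) := by
  obtain ⟨m, n, hne, hmn⟩ := Finite.exists_ne_map_eq_of_infinite (a ^ · : ℕ → M)
  wlog hlt : m < n generalizing m n
  · exact this n m hne.symm hmn.symm (by omega)
  obtain ⟨p, rfl⟩ := Nat.exists_eq_add_of_lt hlt
  have hper : ∀ c, a ^ (m + (p + 1) * c) = a ^ m := by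
    intro c
    induction c with
    | zero => simp
    | succ c ih => rw [mul_add_one, ← add_assoc, pow_add, ih, ← pow_add, ← add_assoc, ← hmn]
  set K := (p + 1) * (m + 1) with hK
  have hmK : m ≤ K := by rw [hK]; nlinarith
  refine ⟨K, by positivity, ?_⟩
  calc a ^ K * a ^ K = a ^ (K - m) * a ^ (m + (p + 1) * (m + 1)) := by
        rw [← pow_add, ← pow_add]; congr 1; omega
    _ = a ^ K := by rw [hper, ← pow_add, Nat.sub_add_cancel hmK]

theorem exists_isIdempotentElem_pow_pow [Finite M] (a b : M) :
    ∃ k ≠ 0, IsIdempotentElem (a ^ k) ∧ IsIdempotentElem (b ^ k) := by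
  obtain ⟨k, hk, ha⟩ := exists_isIdempotentElem_pow a
  obtain ⟨l, hl, hb⟩ := exists_isIdempotentElem_pow b
  exact ⟨k * l, mul_ne_zero hk hl, pow_mul a k l ▸ ha.pow l,
    mul_comm l k ▸ pow_mul b l k ▸ hb.pow k⟩

end Idempotent

def oddBlocks (h : ℕ → ℕ) : Set ℕ := ⋃ i, Ico (h (2 + 2 * i + 1)) (h (2 + 2 * i + 2))

section OddBlocks

variable {A : Type*} {h : ℕ → ℕ} (x₁ x₂ : ℕ → A) [DecidablePred (· ∈ oddBlocks h)]

theorem piecewise_oddBlocks_eqOn_Iio (hh : Monotone h) :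
    EqOn ((oddBlocks h).piecewise x₁ x₂) x₂ (Iio (h 2)) := by
  intro m hm
  refine piecewise_eq_of_notMem _ _ _ fun hmem => ?_
  obtain ⟨i, hi⟩ := mem_iUnion.1 hmem
  exact ((hh (by omega : 2 ≤ 2 + 2 * i + 1)).trans hi.1).not_gt hm

theorem piecewise_oddBlocks_eqOn_even (hh : Monotone h) (i : ℕ) :
    EqOn ((oddBlocks h).piecewise x₁ x₂) x₂ (Ico (h (2 + 2 * i)) (h (2 + 2 * i + 1))) :=
  (piecewise_eqOn_compl (oddBlocks h) x₁ x₂).mono (disjoint_iUnion_right.2 fun i' =>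
    hh.pairwise_disjoint_on_Ico_succ (by omega : 2 + 2 * i ≠ 2 + 2 * i' + 1)).subset_compl_right

theorem piecewise_oddBlocks_eqOn_odd (i : ℕ) :
    EqOn ((oddBlocks h).piecewise x₁ x₂) x₁ (Ico (h (2 + 2 * i + 1)) (h (2 + 2 * i + 2))) :=
  (piecewise_eqOn (oddBlocks h) x₁ x₂).mono (subset_iUnion_of_subset i subset_rfl)

end OddBlocks

theorem exists_switch_and_alternate {A : Type*} {h : ℕ → ℕ} (hh : Monotone h) (x₁ x₂ : ℕ → A) :
    ∃ y₁ y₂ : ℕ → A, EqOn y₁ x₂ (Iio (h 2)) ∧ EqOn y₁ x₁ (Ici (h 2)) ∧ EqOn y₂ x₂ (Iio (h 2)) ∧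
      (∀ i, EqOn y₂ x₂ (Ico (h (2 + 2 * i)) (h (2 + 2 * i + 1)))) ∧
      ∀ i, EqOn y₂ x₁ (Ico (h (2 + 2 * i + 1)) (h (2 + 2 * i + 2))) := by
  classical
  refine ⟨(Ici (h 2)).piecewise x₁ x₂, (oddBlocks h).piecewise x₁ x₂, ?_,
    piecewise_eqOn _ _ _, piecewise_oddBlocks_eqOn_Iio x₁ x₂ hh,
    piecewise_oddBlocks_eqOn_even x₁ x₂ hh, piecewise_oddBlocks_eqOn_odd x₁ x₂⟩
  simpa only [compl_Ici] using piecewise_eqOn_compl (Ici (h 2)) x₁ x₂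

theorem stmt8_general {A Δ M N : Type*} [Monoid M] [Monoid N] [Finite N]
    (z : ℕ → Δ) (x₁ x₂ : ℕ → A) (f : A × Δ → M) (g : A × A → N)
    (h : ℕ → ℕ) (hmono : StrictMono h)
    -- (a): every h-block contains a position where x₁ and x₂ differ
    (ha : ∀ n : ℕ, ∃ m : ℕ, h n ≤ m ∧ m < h (n + 1) ∧ x₁ m ≠ x₂ m)
    -- (b): a common idempotent q for both convolutions with the parameters z
    (q : M) (hq : q * q = q)
    (hb₁ : Homog f q h (zipWord x₁ z)) (hb₂ : Homog f q h (zipWord x₂ z))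
    -- (c): idempotents t_{ij} with t₁₁ = t₂₂
    (t₁₁ t₁₂ t₂₁ t₂₂ : N)
    (ht₁₁ : t₁₁ * t₁₁ = t₁₁)
    (hteq : t₁₁ = t₂₂)
    (hc₁₁ : Homog g t₁₁ h (zipWord x₁ x₁)) (hc₁₂ : Homog g t₁₂ h (zipWord x₁ x₂))
    (hc₂₁ : Homog g t₂₁ h (zipWord x₂ x₁)) (hc₂₂ : Homog g t₂₂ h (zipWord x₂ x₂)) :
    ∃ (G : ℕ → ℕ) (y₁ y₂ : ℕ → A) (s : M) (t tu td : N),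
      StrictMono G ∧ (∀ n : ℕ, ∃ m : ℕ, G n = h m) ∧
      s * s = s ∧ t * t = t ∧ tu * tu = tu ∧ td * td = td ∧
      -- (1)
      (∀ m : ℕ, m < h 2 → y₁ m = x₂ m) ∧ (∀ m : ℕ, h 2 ≤ m → y₁ m = x₁ m) ∧
      (∀ m : ℕ, m < h 2 → y₂ m = x₂ m) ∧
      -- (2)
      (∀ n : ℕ, ∃ m : ℕ, G n ≤ m ∧ m < G (n + 1) ∧ y₁ m ≠ y₂ m) ∧
      -- (3)
      Homog f s G (zipWord y₁ z) ∧ Homog f s G (zipWord y₂ z) ∧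
      -- (4)
      tu * t = tu ∧ td * t = td ∧
      blockProd g (zipWord y₁ y₁) 0 (G 0) * t = blockProd g (zipWord y₁ y₁) 0 (G 0) ∧
      blockProd g (zipWord y₂ y₂) 0 (G 0) * t = blockProd g (zipWord y₂ y₂) 0 (G 0) ∧
      -- (5)
      Homog g t G (zipWord y₁ y₁) ∧ Homog g t G (zipWord y₂ y₂) ∧
      Homog g tu G (zipWord y₁ y₂) ∧ Homog g td G (zipWord y₂ y₁) := by
  subst hteq
  have hh := hmono.monotone
  obtain ⟨k, hk, htu, htd⟩ := exists_isIdempotentElem_pow_pow (t₁₂ * t₁₁) (t₂₁ * t₁₁)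
  obtain ⟨y₁, y₂, hy₁x₂, hy₁x₁, hy₂x₂, hy₂u, hy₂v⟩ := exists_switch_and_alternate hh x₁ x₂
  have hy₁u (i : ℕ) : EqOn y₁ x₁ (Ico (h (2 + 2 * i)) (h (2 + 2 * i + 1))) :=
    hy₁x₁.mono fun m hm => (hh (by omega)).trans hm.1
  have hy₁v (i : ℕ) : EqOn y₁ x₁ (Ico (h (2 + 2 * i + 1)) (h (2 + 2 * i + 2))) :=
    hy₁x₁.mono fun m hm => (hh (by omega)).trans hm.1
  have hsep (n : ℕ) :
      ∃ m, h (2 + 2 * (k * n)) ≤ m ∧ m < h (2 + 2 * (k * (n + 1))) ∧ y₁ m ≠ y₂ m := by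
    obtain ⟨m, hm₁, hm₂, hne⟩ := ha (2 + 2 * (k * n))
    refine ⟨m, hm₁, hm₂.trans_le (hh ?_), ?_⟩
    · rw [mul_add_one]; omega
    · rwa [hy₁u _ ⟨hm₁, hm₂⟩, hy₂u _ ⟨hm₁, hm₂⟩]
  refine ⟨fun n => h (2 + 2 * (k * n)), y₁, y₂, q, t₁₁, (t₁₂ * t₁₁) ^ k, (t₂₁ * t₁₁) ^ k,
    hmono.comp fun a b hab => by have := Nat.pos_of_ne_zero hk; gcongr, fun n => ⟨_, rfl⟩,
    hq, ht₁₁, htu, htd, fun m => @hy₁x₂ m, fun m => @hy₁x₁ m, fun m => @hy₂x₂ m, hsep,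
    homog_coarsen_of_eqOn_of_isIdempotentElem f hh 2 hk
      (fun i => (hy₁u i).zipWord (eqOn_refl z _)) (fun i => (hy₁v i).zipWord (eqOn_refl z _))
      hq hb₁ hb₁,
    homog_coarsen_of_eqOn_of_isIdempotentElem f hh 2 hk
      (fun i => (hy₂u i).zipWord (eqOn_refl z _)) (fun i => (hy₂v i).zipWord (eqOn_refl z _))
      hq hb₂ hb₁,
    IsIdempotentElem.mul_pow_mul_self ht₁₁ hk, IsIdempotentElem.mul_pow_mul_self ht₁₁ hk,
    blockProd_mul_eq_self_of_eqOn_homog g hh (j := 1) (hy₁x₂.zipWord hy₁x₂) hc₂₂ ht₁₁,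
    blockProd_mul_eq_self_of_eqOn_homog g hh (j := 1) (hy₂x₂.zipWord hy₂x₂) hc₂₂ ht₁₁,
    homog_coarsen_of_eqOn_of_isIdempotentElem g hh 2 hk
      (fun i => (hy₁u i).zipWord (hy₁u i)) (fun i => (hy₁v i).zipWord (hy₁v i)) ht₁₁ hc₁₁ hc₁₁,
    homog_coarsen_of_eqOn_of_isIdempotentElem g hh 2 hk
      (fun i => (hy₂u i).zipWord (hy₂u i)) (fun i => (hy₂v i).zipWord (hy₂v i)) ht₁₁ hc₂₂ hc₁₁,
    homog_coarsen_of_eqOn g hh 2 k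
      (fun i => (hy₁u i).zipWord (hy₂u i)) (fun i => (hy₁v i).zipWord (hy₂v i)) hc₁₂ hc₁₁,
    homog_coarsen_of_eqOn g hh 2 k
      (fun i => (hy₂u i).zipWord (hy₁u i)) (fun i => (hy₂v i).zipWord (hy₁v i)) hc₂₁ hc₁₁⟩

/-- Coarsening step. -/
theorem stmt8 {A Δ M N : Type*} [Monoid M] [Finite M] [Monoid N] [Finite N]
    (z : ℕ → Δ) (x₁ x₂ : ℕ → A) (f : A × Δ → M) (g : A × A → N)
    (h : ℕ → ℕ) (hmono : StrictMono h)
    -- (a): every h-block contains a position where x₁ and x₂ differ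
    (ha : ∀ n : ℕ, ∃ m : ℕ, h n ≤ m ∧ m < h (n + 1) ∧ x₁ m ≠ x₂ m)
    -- (b): a common idempotent q for both convolutions with the parameters z
    (q : M) (hq : q * q = q)
    (hb₁ : Homog f q h (zipWord x₁ z)) (hb₂ : Homog f q h (zipWord x₂ z))
    -- (c): idempotents t_{ij} with t₁₁ = t₂₂
    (t₁₁ t₁₂ t₂₁ t₂₂ : N)
    (ht₁₁ : t₁₁ * t₁₁ = t₁₁) (ht₁₂ : t₁₂ * t₁₂ = t₁₂)
    (ht₂₁ : t₂₁ * t₂₁ = t₂₁) (ht₂₂ : t₂₂ * t₂₂ = t₂₂)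
    (hteq : t₁₁ = t₂₂)
    (hc₁₁ : Homog g t₁₁ h (zipWord x₁ x₁)) (hc₁₂ : Homog g t₁₂ h (zipWord x₁ x₂))
    (hc₂₁ : Homog g t₂₁ h (zipWord x₂ x₁)) (hc₂₂ : Homog g t₂₂ h (zipWord x₂ x₂)) :
    ∃ (G : ℕ → ℕ) (y₁ y₂ : ℕ → A) (s : M) (t tu td : N),
      StrictMono G ∧ (∀ n : ℕ, ∃ m : ℕ, G n = h m) ∧
      s * s = s ∧ t * t = t ∧ tu * tu = tu ∧ td * td = td ∧
      -- (1)
      (∀ m : ℕ, m < h 2 → y₁ m = x₂ m) ∧ (∀ m : ℕ, h 2 ≤ m → y₁ m = x₁ m) ∧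
      (∀ m : ℕ, m < h 2 → y₂ m = x₂ m) ∧
      -- (2)
      (∀ n : ℕ, ∃ m : ℕ, G n ≤ m ∧ m < G (n + 1) ∧ y₁ m ≠ y₂ m) ∧
      -- (3)
      Homog f s G (zipWord y₁ z) ∧ Homog f s G (zipWord y₂ z) ∧
      -- (4)
      tu * t = tu ∧ td * t = td ∧
      blockProd g (zipWord y₁ y₁) 0 (G 0) * t = blockProd g (zipWord y₁ y₁) 0 (G 0) ∧
      blockProd g (zipWord y₂ y₂) 0 (G 0) * t = blockProd g (zipWord y₂ y₂) 0 (G 0) ∧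
      -- (5)
      Homog g t G (zipWord y₁ y₁) ∧ Homog g t G (zipWord y₂ y₂) ∧
      Homog g tu G (zipWord y₁ y₂) ∧ Homog g td G (zipWord y₂ y₁) :=
  stmt8_general z x₁ x₂ f g h hmono ha q hq hb₁ hb₂ t₁₁ t₁₂ t₂₁ t₂₂ ht₁₁ hteq hc₁₁ hc₁₂ hc₂₁ hc₂₂
end

section
/- Let Σ be an alphabet, g : ℕ → ℕ strictly increasing, and y₁, y₂ : ℕ → Σ ω-words such that for every n ∈ ℕ there is a position m with g(n) ≤ m < g(n+1) and y₁ m ≠ y₂ m. Then for all S, T ⊆ ℕ, the shuffles satisfy: χ_S =_e χ_T if and only if S =_e T (i.e. the symmetric difference S △ T is finite). In particular, the map S ↦ χ_S induces an injection from equal-ends classes of subsets of ℕ into equal-ends classes of ω-words. -/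
open Classical in
/-- The shuffle `χ_S` of `y₁` and `y₂` along `g` and `S`: it equals `y₂` below `g 0`,
and on the block `[g n, g (n+1))` it equals `y₂` if `n ∈ S` and `y₁` otherwise. -/
noncomputable def shuffle {A : Type*} (y₁ y₂ : ℕ → A) (g : ℕ → ℕ) (S : Set ℕ) : ℕ → A :=
  fun i =>
    if i < g 0 then y₂ i
    else if Nat.findGreatest (fun n => g n ≤ i) i ∈ S then y₂ i else y₁ i

/-! On the block `[g n, g (n+1))` the shuffle `χ_S` copies `y₂` or `y₁` according to whether
`n ∈ S`. So `χ_S` and `χ_T` agree on every block whose index is outside `S ∆ T`, and, as `y₁` and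
`y₂` differ somewhere in every block, they disagree somewhere in every block whose index is in
`S ∆ T`. Since the blocks tile `[g 0, ∞)` and move off to infinity, `χ_S =_e χ_T` exactly when
`S ∆ T` is finite; the injection on classes is then the induced map of quotients. -/

open Filter Function

theorem Quot.exists_injective_map_of_iff {α β : Type*} {r : α → α → Prop}
    {s : β → β → Prop} (hs : Equivalence s) {f : α → β} (hf : ∀ a b, s (f a) (f b) ↔ r a b) :
    ∃ F : Quot r → Quot s, Injective F ∧ ∀ a, F (Quot.mk r a) = Quot.mk s (f a) := by
  refine ⟨Quot.map f fun a b h => (hf a b).2 h, ?_, fun _ => rfl⟩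
  rintro ⟨a⟩ ⟨b⟩ h
  exact Quot.sound ((hf a b).1 (hs.eqvGen_iff.1 (Quot.eqvGen_exact h)))

theorem StrictMono.exists_mem_block {g : ℕ → ℕ} (hg : StrictMono g) {i : ℕ} (hi : g 0 ≤ i) :
    ∃ n, g n ≤ i ∧ i < g (n + 1) := by
  set n := Nat.findGreatest (fun n => g n ≤ i) i
  refine ⟨n, Nat.findGreatest_spec (P := fun n => g n ≤ i) (Nat.zero_le i) hi, ?_⟩
  by_contra! hle
  exact Nat.findGreatest_is_greatest (Nat.lt_succ_self n) (hg.le_apply.trans hle) hle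

section Shuffle

variable {A : Type*} {g : ℕ → ℕ} (y₁ y₂ : ℕ → A) {S T : Set ℕ} {n i : ℕ}

open Classical in
theorem shuffle_of_mem_block (hg : StrictMono g) (S : Set ℕ) (h₁ : g n ≤ i)
    (h₂ : i < g (n + 1)) : shuffle y₁ y₂ g S i = if n ∈ S then y₂ i else y₁ i := by
  have hge : ¬ i < g 0 := not_lt.2 ((hg.monotone (Nat.zero_le n)).trans h₁)
  have hblock : Nat.findGreatest (fun n => g n ≤ i) i = n := by
    rw [Nat.findGreatest_eq_iff]
    refine ⟨hg.le_apply.trans h₁, fun _ => h₁, fun k hk _ hgk => ?_⟩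
    exact absurd hgk (not_le.2 (h₂.trans_le (hg.monotone hk)))
  simp only [shuffle, hge, if_false, hblock]

open Classical in
theorem shuffle_eq_shuffle_of_mem_block (hg : StrictMono g) (h₁ : g n ≤ i)
    (h₂ : i < g (n + 1)) (hST : n ∈ S ↔ n ∈ T) :
    shuffle y₁ y₂ g S i = shuffle y₁ y₂ g T i := by
  rw [shuffle_of_mem_block y₁ y₂ hg S h₁ h₂, shuffle_of_mem_block y₁ y₂ hg T h₁ h₂]
  exact if_congr hST rfl rfl

theorem shuffle_ne_shuffle_of_mem_symmDiff (hg : StrictMono g) (h₁ : g n ≤ i)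
    (h₂ : i < g (n + 1)) (hy : y₁ i ≠ y₂ i) (hST : n ∈ symmDiff S T) :
    shuffle y₁ y₂ g S i ≠ shuffle y₁ y₂ g T i := by
  rw [shuffle_of_mem_block y₁ y₂ hg S h₁ h₂, shuffle_of_mem_block y₁ y₂ hg T h₁ h₂]
  rcases Set.mem_symmDiff.1 hST with ⟨hS, hT⟩ | ⟨hT, hS⟩
  · simpa [hS, hT] using hy.symm
  · simpa [hS, hT] using hy

theorem shuffle_eventuallyEq_of_finite_symmDiff (hg : StrictMono g)
    (h : (symmDiff S T).Finite) : shuffle y₁ y₂ g S =ᶠ[atTop] shuffle y₁ y₂ g T := by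
  obtain ⟨N, hN⟩ := h.bddAbove
  refine eventually_atTop.2 ⟨g (N + 1), fun i hi => ?_⟩
  obtain ⟨n, h₁, h₂⟩ := hg.exists_mem_block ((hg.monotone (Nat.zero_le _)).trans hi)
  have hNn : N < n := Nat.succ_lt_succ_iff.1 (hg.lt_iff_lt.1 (hi.trans_lt h₂))
  refine shuffle_eq_shuffle_of_mem_block y₁ y₂ hg h₁ h₂ ?_
  by_contra hST
  exact (hN (Set.mem_symmDiff.2 (by tauto))).not_gt hNn

theorem finite_symmDiff_of_shuffle_eventuallyEq (hg : StrictMono g)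
    (hd : ∀ n, ∃ m, g n ≤ m ∧ m < g (n + 1) ∧ y₁ m ≠ y₂ m)
    (h : shuffle y₁ y₂ g S =ᶠ[atTop] shuffle y₁ y₂ g T) : (symmDiff S T).Finite := by
  obtain ⟨N, hN⟩ := eventually_atTop.1 h
  refine (Set.finite_Iio N).subset fun n hn => Set.mem_Iio.2 <| lt_of_not_ge fun hNn => ?_
  obtain ⟨m, h₁, h₂, hy⟩ := hd n
  exact shuffle_ne_shuffle_of_mem_symmDiff y₁ y₂ hg h₁ h₂ hy hn
    (hN m (hNn.trans (hg.le_apply.trans h₁)))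

theorem shuffle_eventuallyEq_iff (hg : StrictMono g)
    (hd : ∀ n, ∃ m, g n ≤ m ∧ m < g (n + 1) ∧ y₁ m ≠ y₂ m) :
    shuffle y₁ y₂ g S =ᶠ[atTop] shuffle y₁ y₂ g T ↔ (symmDiff S T).Finite :=
  ⟨finite_symmDiff_of_shuffle_eventuallyEq y₁ y₂ hg hd,
    shuffle_eventuallyEq_of_finite_symmDiff y₁ y₂ hg⟩

end Shuffle

/-- if every `g`-block contains a position where `y₁` and `y₂` differ,
then `χ_S =_e χ_T` iff `S` and `T` have finite symmetric difference; in particular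
`S ↦ χ_S` induces an injection of equal-ends classes of subsets of ℕ into equal-ends
classes of ω-words. -/
theorem stmt11 {A : Type*} (g : ℕ → ℕ) (hg : StrictMono g) (y₁ y₂ : ℕ → A)
    (hd : ∀ n : ℕ, ∃ m : ℕ, g n ≤ m ∧ m < g (n + 1) ∧ y₁ m ≠ y₂ m) :
    (∀ S T : Set ℕ,
      ((∀ᶠ i in Filter.atTop, shuffle y₁ y₂ g S i = shuffle y₁ y₂ g T i) ↔
        (symmDiff S T).Finite)) ∧
    ∃ F : Quot (fun S T : Set ℕ => (symmDiff S T).Finite) →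
          Quot (fun x y : ℕ → A => ∀ᶠ n in Filter.atTop, x n = y n),
      Function.Injective F ∧
      ∀ S : Set ℕ, F (Quot.mk _ S) = Quot.mk _ (shuffle y₁ y₂ g S) :=
  ⟨fun _ _ => shuffle_eventuallyEq_iff y₁ y₂ hg hd,
    Quot.exists_injective_map_of_iff (germSetoid atTop A).iseqv
      fun _ _ => shuffle_eventuallyEq_iff y₁ y₂ hg hd⟩
end
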